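/- arXiv:1312.3058 — 4 statements merged into one kernel-verified Lean document; each statement's English description precedes it below -/
import Mathlib

section
/- Let C_p, C_x, f, P, ρ, λ03, λ12 be real numbers and L a real number with C_x > 0, L - λ03² > 0, f ≥ 0 and P ≠ 0. Define MSE(α, β) = P² f (C_p² + α² C_x² + β² L + 2 α ρ C_p C_x + 2 β C_p λ12 + 2 α β C_x λ03). Then the point (α*, β*) with α* = C_p (λ03 λ12 − ρ L) / (C_x (L − λ03²)) and β* = C_p (ρ λ03 − λ12) / (L − λ03²) is a global minimizer of MSE, i.e., MSE(α*, β*) ≤ MSE(α, β) for all real α, β. -/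
/-!
The MSE is, up to the factor `P² f ≥ 0`, a quadratic polynomial in `(α, β)` whose quadratic part
`Cx² α² + 2 Cx λ₀₃ α β + L β²` has determinant `Cx² (L - λ₀₃²) > 0`, so it is a convex
function; `(α*, β*)` solves the two linear critical-point equations, hence is a global minimizer.
-/

theorem quadratic_form_nonneg {a b h : ℝ} (ha : 0 < a) (hdet : 0 ≤ a * b - h ^ 2) (u v : ℝ) :
    0 ≤ a * u ^ 2 + 2 * h * u * v + b * v ^ 2 := by
  have hsq : a * (a * u ^ 2 + 2 * h * u * v + b * v ^ 2) = (a * u + h * v) ^ 2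
      + (a * b - h ^ 2) * v ^ 2 := by ring
  refine nonneg_of_mul_nonneg_right ?_ ha
  rw [hsq]
  positivity

theorem quadratic_le_of_critical {a b h d e : ℝ} (ha : 0 < a) (hdet : 0 ≤ a * b - h ^ 2)
    {x₀ y₀ : ℝ} (hx : a * x₀ + h * y₀ + d = 0) (hy : h * x₀ + b * y₀ + e = 0) (x y : ℝ) :
    a * x₀ ^ 2 + b * y₀ ^ 2 + 2 * h * x₀ * y₀ + 2 * d * x₀ + 2 * e * y₀
      ≤ a * x ^ 2 + b * y ^ 2 + 2 * h * x * y + 2 * d * x + 2 * e * y := by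
  -- expanded around `(x₀, y₀)` the linear terms vanish, leaving the form in `(x - x₀, y - y₀)`
  linear_combination quadratic_form_nonneg ha hdet (x - x₀) (y - y₀)
    - 2 * (x - x₀) * hx - 2 * (y - y₀) * hy

theorem mse_t1_global_min_general (Cp Cx f P ρ lam03 lam12 L : ℝ)
    (hCx : 0 < Cx) (hL : 0 < L - lam03 ^ 2) (hf : 0 ≤ f) :
    ∀ α β : ℝ,
      P ^ 2 * f * (Cp ^ 2
          + (Cp * (lam03 * lam12 - ρ * L) / (Cx * (L - lam03 ^ 2))) ^ 2 * Cx ^ 2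
          + (Cp * (ρ * lam03 - lam12) / (L - lam03 ^ 2)) ^ 2 * L
          + 2 * (Cp * (lam03 * lam12 - ρ * L) / (Cx * (L - lam03 ^ 2))) * ρ * Cp * Cx
          + 2 * (Cp * (ρ * lam03 - lam12) / (L - lam03 ^ 2)) * Cp * lam12
          + 2 * (Cp * (lam03 * lam12 - ρ * L) / (Cx * (L - lam03 ^ 2)))
              * (Cp * (ρ * lam03 - lam12) / (L - lam03 ^ 2)) * Cx * lam03)
      ≤ P ^ 2 * f * (Cp ^ 2 + α ^ 2 * Cx ^ 2 + β ^ 2 * L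
          + 2 * α * ρ * Cp * Cx + 2 * β * Cp * lam12 + 2 * α * β * Cx * lam03) := by
  intro α β
  have hCx₀ : Cx ≠ 0 := hCx.ne'
  have hL₀ : L - lam03 ^ 2 ≠ 0 := hL.ne'
  have hdet : 0 ≤ Cx ^ 2 * L - (Cx * lam03) ^ 2 := by
    rw [show Cx ^ 2 * L - (Cx * lam03) ^ 2 = Cx ^ 2 * (L - lam03 ^ 2) by ring]
    positivity
  have hmin := quadratic_le_of_critical (d := ρ * Cp * Cx) (e := Cp * lam12) (by positivity) hdet
    (x₀ := Cp * (lam03 * lam12 - ρ * L) / (Cx * (L - lam03 ^ 2)))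
    (y₀ := Cp * (ρ * lam03 - lam12) / (L - lam03 ^ 2))
    (by field_simp; ring) (by field_simp; ring) α β
  refine mul_le_mul_of_nonneg_left ?_ (by positivity)
  linear_combination hmin

/-- The point (α*, β*) is a global minimizer of the first-order MSE of the
proposed estimator t₁. -/
theorem mse_t1_global_min (Cp Cx f P ρ lam03 lam12 L : ℝ)
    (hCx : 0 < Cx) (hL : 0 < L - lam03 ^ 2) (hf : 0 ≤ f) (hP : P ≠ 0) :
    ∀ α β : ℝ,
      P ^ 2 * f * (Cp ^ 2
          + (Cp * (lam03 * lam12 - ρ * L) / (Cx * (L - lam03 ^ 2))) ^ 2 * Cx ^ 2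
          + (Cp * (ρ * lam03 - lam12) / (L - lam03 ^ 2)) ^ 2 * L
          + 2 * (Cp * (lam03 * lam12 - ρ * L) / (Cx * (L - lam03 ^ 2))) * ρ * Cp * Cx
          + 2 * (Cp * (ρ * lam03 - lam12) / (L - lam03 ^ 2)) * Cp * lam12
          + 2 * (Cp * (lam03 * lam12 - ρ * L) / (Cx * (L - lam03 ^ 2)))
              * (Cp * (ρ * lam03 - lam12) / (L - lam03 ^ 2)) * Cx * lam03)
      ≤ P ^ 2 * f * (Cp ^ 2 + α ^ 2 * Cx ^ 2 + β ^ 2 * L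
          + 2 * α * ρ * Cp * Cx + 2 * β * Cp * lam12 + 2 * α * β * Cx * lam03) :=
  mse_t1_global_min_general Cp Cx f P ρ lam03 lam12 L hCx hL hf
end

section
/- Let C_p, C_x, f, P, ρ, λ03, λ12, L be real numbers with C_x ≠ 0 and L − λ03² ≠ 0. Define MSE(α, β) = P² f (C_p² + α² C_x² + β² L + 2 α ρ C_p C_x + 2 β C_p λ12 + 2 α β C_x λ03), α* = C_p (λ03 λ12 − ρ L) / (C_x (L − λ03²)) and β* = C_p (ρ λ03 − λ12) / (L − λ03²). Then MSE(α*, β*) = P² f C_p² [1 − ρ² − (λ03 ρ − λ12)² / (L − λ03²)]. -/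
/-!
In the scaled variable `u = α C_x` the MSE is `P² f` times the quadratic
`C_p² + u² + L β² + 2 ρ C_p u + 2 C_p λ₁₂ β + 2 λ₀₃ u β`, and `(α*, β*)` is its critical point.
At a critical point the quadratic part equals minus half the linear part (Euler's identity),
so the value is `C_p² + ρ C_p u* + C_p λ₁₂ β*`, which simplifies to the closed form.
-/

theorem quadratic_eq_of_isCritical {R : Type*} [CommRing R] {a b h g₁ g₂ c x y : R}
    (hx : a * x + h * y + g₁ = 0) (hy : h * x + b * y + g₂ = 0) :
    c + a * x ^ 2 + b * y ^ 2 + 2 * g₁ * x + 2 * g₂ * y + 2 * h * x * y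
      = c + g₁ * x + g₂ * y := by
  linear_combination x * hx + y * hy

/-- Equation (3.5): the value of the MSE of t₁ at the optimum (α*, β*). -/
theorem mse_t1_min_value (Cp Cx f P ρ lam03 lam12 L : ℝ)
    (hCx : Cx ≠ 0) (hL : L - lam03 ^ 2 ≠ 0) :
    P ^ 2 * f * (Cp ^ 2
        + (Cp * (lam03 * lam12 - ρ * L) / (Cx * (L - lam03 ^ 2))) ^ 2 * Cx ^ 2
        + (Cp * (ρ * lam03 - lam12) / (L - lam03 ^ 2)) ^ 2 * L
        + 2 * (Cp * (lam03 * lam12 - ρ * L) / (Cx * (L - lam03 ^ 2))) * ρ * Cp * Cx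
        + 2 * (Cp * (ρ * lam03 - lam12) / (L - lam03 ^ 2)) * Cp * lam12
        + 2 * (Cp * (lam03 * lam12 - ρ * L) / (Cx * (L - lam03 ^ 2)))
            * (Cp * (ρ * lam03 - lam12) / (L - lam03 ^ 2)) * Cx * lam03)
      = P ^ 2 * f * Cp ^ 2
          * (1 - ρ ^ 2 - (lam03 * ρ - lam12) ^ 2 / (L - lam03 ^ 2)) := by
  set u := Cp * (lam03 * lam12 - ρ * L) / (L - lam03 ^ 2)
  set β := Cp * (ρ * lam03 - lam12) / (L - lam03 ^ 2)
  have hαu : Cp * (lam03 * lam12 - ρ * L) / (Cx * (L - lam03 ^ 2)) * Cx = u := by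
    rw [mul_comm Cx, ← div_div, div_mul_cancel₀ _ hCx]
  have hcrit_u : 1 * u + lam03 * β + ρ * Cp = 0 := by
    simp only [u, β]; field_simp; ring
  have hcrit_β : lam03 * u + L * β + Cp * lam12 = 0 := by
    simp only [u, β]; field_simp; ring
  calc _ = P ^ 2 * f * (Cp ^ 2 + 1 * u ^ 2 + L * β ^ 2 + 2 * (ρ * Cp) * u
          + 2 * (Cp * lam12) * β + 2 * lam03 * u * β) := by
        rw [← hαu]; ring
    _ = P ^ 2 * f * (Cp ^ 2 + ρ * Cp * u + Cp * lam12 * β) := by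
        rw [quadratic_eq_of_isCritical hcrit_u hcrit_β]
    _ = _ := by
        simp only [u, β]; field_simp; ring
end

section
/- Let C_p, f, P, ρ, λ03, λ12, L be real numbers with f ≥ 0, C_p² ≥ 0, P² ≥ 0 and L − λ03² > 0. Then P² f C_p² [1 − ρ² − (λ03 ρ − λ12)² / (L − λ03²)] ≤ f P² C_p² (1 − ρ²). That is, the minimum mean squared error of the proposed estimator t₁ never exceeds the minimum mean squared error f P² C_p² (1 − ρ_pb²) of the Singh et al. (2010) class of estimators t_b. -/
theorem mse_t1_le_mse_tb_general (Cp f P ρ lam03 lam12 L : ℝ)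
    (hf : 0 ≤ f) (hL : 0 < L - lam03 ^ 2) :
    P ^ 2 * f * Cp ^ 2 * (1 - ρ ^ 2 - (lam03 * ρ - lam12) ^ 2 / (L - lam03 ^ 2))
      ≤ f * P ^ 2 * Cp ^ 2 * (1 - ρ ^ 2) := by
  have hgain : 0 ≤ (lam03 * ρ - lam12) ^ 2 / (L - lam03 ^ 2) :=
    div_nonneg (sq_nonneg _) hL.le
  calc P ^ 2 * f * Cp ^ 2 * (1 - ρ ^ 2 - (lam03 * ρ - lam12) ^ 2 / (L - lam03 ^ 2))
      ≤ P ^ 2 * f * Cp ^ 2 * (1 - ρ ^ 2) :=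
        mul_le_mul_of_nonneg_left (sub_le_self _ hgain) (by positivity)
    _ = f * P ^ 2 * Cp ^ 2 * (1 - ρ ^ 2) := by ring

/-- MSE(t₁)_min ≤ MSE(t_b)_min = f P² C_p² (1 − ρ²). -/
theorem mse_t1_le_mse_tb (Cp f P ρ lam03 lam12 L : ℝ)
    (hf : 0 ≤ f) (hCp : 0 ≤ Cp ^ 2) (hP : 0 ≤ P ^ 2) (hL : 0 < L - lam03 ^ 2) :
    P ^ 2 * f * Cp ^ 2 * (1 - ρ ^ 2 - (lam03 * ρ - lam12) ^ 2 / (L - lam03 ^ 2))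
      ≤ f * P ^ 2 * Cp ^ 2 * (1 - ρ ^ 2) :=
  mse_t1_le_mse_tb_general Cp f P ρ lam03 lam12 L hf hL
end

section
/- Let C_p, C_x, f, P, ρ, λ03, λ12 and L be real numbers with C_x > 0, L − λ03² > 0, f ≥ 0. Define M(H₁, H₂) = f (P² C_p² + C_x² H₁² + L H₂² + 2 P ρ C_p C_x H₁ + 2 P C_p λ12 H₂ + 2 C_x λ03 H₁ H₂). Then the point (H₁*, H₂*) with H₁* = P C_p (λ03 λ12 − ρ L) / (C_x (L − λ03²)) and H₂* = P C_p (ρ λ03 − λ12) / (L − λ03²) is a global minimizer of M, and M(H₁*, H₂*) = P² f C_p² [1 − ρ² − (λ03 ρ − λ12)² / (L − λ03²)]. -/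
/-!
Substituting `u = C_x H₁` turns the MSE into `f` times a monic quadratic
`u² + 2βuv + Lv² + 2γu + 2δv + κ` in `(u, H₂)`. Completing the square twice writes it as
`(u + βv + γ)² + (L - β²)(v - v*)² + m`, so for `L - β² > 0` its minimum `m` is attained
where both squares vanish, and `f ≥ 0` preserves the comparison.
-/

namespace MonicQuadratic

variable (β L γ δ κ : ℝ)

def eval (u v : ℝ) : ℝ :=
  u ^ 2 + 2 * β * u * v + L * v ^ 2 + 2 * γ * u + 2 * δ * v + κ

noncomputable def argminSnd : ℝ := (β * γ - δ) / (L - β ^ 2)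

noncomputable def argminFst : ℝ := -β * argminSnd β L γ δ - γ

noncomputable def minValue : ℝ := κ - γ ^ 2 - (δ - β * γ) ^ 2 / (L - β ^ 2)

variable {β L}

theorem eval_eq_sq_add_sq (hL : L - β ^ 2 ≠ 0) (u v : ℝ) :
    eval β L γ δ κ u v = (u + β * v + γ) ^ 2
      + (L - β ^ 2) * (v - argminSnd β L γ δ) ^ 2 + minValue β L γ δ κ := by
  unfold eval argminSnd minValue
  field_simp
  ring

theorem eval_argmin (hL : L - β ^ 2 ≠ 0) :
    eval β L γ δ κ (argminFst β L γ δ) (argminSnd β L γ δ) = minValue β L γ δ κ := by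
  rw [eval_eq_sq_add_sq γ δ κ hL, argminFst]
  ring

theorem minValue_le_eval (hL : 0 < L - β ^ 2) (u v : ℝ) :
    minValue β L γ δ κ ≤ eval β L γ δ κ u v := by
  rw [eval_eq_sq_add_sq γ δ κ hL.ne']
  have := mul_nonneg hL.le (sq_nonneg (v - argminSnd β L γ δ))
  nlinarith [sq_nonneg (u + β * v + γ)]

end MonicQuadratic

def mseT2 (Cp Cx f P ρ lam03 lam12 L H1 H2 : ℝ) : ℝ :=
  f * (P ^ 2 * Cp ^ 2 + Cx ^ 2 * H1 ^ 2 + L * H2 ^ 2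
    + 2 * P * ρ * Cp * Cx * H1 + 2 * P * Cp * lam12 * H2
    + 2 * Cx * lam03 * H1 * H2)

theorem mseT2_eq_mul_eval (Cp Cx f P ρ lam03 lam12 L H1 H2 : ℝ) :
    mseT2 Cp Cx f P ρ lam03 lam12 L H1 H2
      = f * MonicQuadratic.eval lam03 L (P * ρ * Cp) (P * Cp * lam12) (P ^ 2 * Cp ^ 2)
          (Cx * H1) H2 := by
  unfold mseT2 MonicQuadratic.eval
  ring

/-- Optimization (3.12)–(3.14): (H₁*, H₂*) is a global minimizer of the MSE of
the wider class t₂, and the minimum value equals that of t₁. -/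
theorem mse_t2_global_min_and_value (Cp Cx f P ρ lam03 lam12 L : ℝ)
    (hCx : 0 < Cx) (hL : 0 < L - lam03 ^ 2) (hf : 0 ≤ f) :
    (∀ H1 H2 : ℝ,
      f * (P ^ 2 * Cp ^ 2
          + Cx ^ 2 * (P * Cp * (lam03 * lam12 - ρ * L) / (Cx * (L - lam03 ^ 2))) ^ 2
          + L * (P * Cp * (ρ * lam03 - lam12) / (L - lam03 ^ 2)) ^ 2
          + 2 * P * ρ * Cp * Cx * (P * Cp * (lam03 * lam12 - ρ * L) / (Cx * (L - lam03 ^ 2)))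
          + 2 * P * Cp * lam12 * (P * Cp * (ρ * lam03 - lam12) / (L - lam03 ^ 2))
          + 2 * Cx * lam03 * (P * Cp * (lam03 * lam12 - ρ * L) / (Cx * (L - lam03 ^ 2)))
              * (P * Cp * (ρ * lam03 - lam12) / (L - lam03 ^ 2)))
        ≤ f * (P ^ 2 * Cp ^ 2 + Cx ^ 2 * H1 ^ 2 + L * H2 ^ 2
            + 2 * P * ρ * Cp * Cx * H1 + 2 * P * Cp * lam12 * H2
            + 2 * Cx * lam03 * H1 * H2)) ∧
    f * (P ^ 2 * Cp ^ 2
        + Cx ^ 2 * (P * Cp * (lam03 * lam12 - ρ * L) / (Cx * (L - lam03 ^ 2))) ^ 2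
        + L * (P * Cp * (ρ * lam03 - lam12) / (L - lam03 ^ 2)) ^ 2
        + 2 * P * ρ * Cp * Cx * (P * Cp * (lam03 * lam12 - ρ * L) / (Cx * (L - lam03 ^ 2)))
        + 2 * P * Cp * lam12 * (P * Cp * (ρ * lam03 - lam12) / (L - lam03 ^ 2))
        + 2 * Cx * lam03 * (P * Cp * (lam03 * lam12 - ρ * L) / (Cx * (L - lam03 ^ 2)))
            * (P * Cp * (ρ * lam03 - lam12) / (L - lam03 ^ 2)))
      = P ^ 2 * f * Cp ^ 2
          * (1 - ρ ^ 2 - (lam03 * ρ - lam12) ^ 2 / (L - lam03 ^ 2)) := by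
  open MonicQuadratic in
  have hH2 : P * Cp * (ρ * lam03 - lam12) / (L - lam03 ^ 2)
      = argminSnd lam03 L (P * ρ * Cp) (P * Cp * lam12) := by
    unfold argminSnd
    ring
  have hH1 : Cx * (P * Cp * (lam03 * lam12 - ρ * L) / (Cx * (L - lam03 ^ 2)))
      = argminFst lam03 L (P * ρ * Cp) (P * Cp * lam12) := by
    unfold argminFst argminSnd
    field_simp
    ring
  change (∀ H1 H2 : ℝ, mseT2 Cp Cx f P ρ lam03 lam12 L _ _
      ≤ mseT2 Cp Cx f P ρ lam03 lam12 L H1 H2) ∧ mseT2 Cp Cx f P ρ lam03 lam12 L _ _ = _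
  simp only [mseT2_eq_mul_eval, hH1, hH2, eval_argmin _ _ _ hL.ne']
  refine ⟨fun H1 H2 => mul_le_mul_of_nonneg_left (minValue_le_eval _ _ _ hL _ _) hf, ?_⟩
  unfold minValue
  ring
end
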